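/- For any p ∈ [1,∞], any function g on ℝ^d with ∇g ∈ L^p(ℝ^d), and any probability measures μ, ν on ℝ^d with finite first moment, ‖g ∗ (μ − ν)‖_{L^p} ≤ ‖∇g‖_{L^p} · W₁(μ, ν). -/

import Mathlib

open MeasureTheory ENNReal NNReal

/-- Convolution of a function with a measure: `(f ∗ μ)(x) = ∫ f(x - y) μ(dy)`. -/
noncomputable def measConv {d : ℕ} (f : EuclideanSpace ℝ (Fin d) → ℝ)
    (μ : Measure (EuclideanSpace ℝ (Fin d))) (x : EuclideanSpace ℝ (Fin d)) : ℝ :=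
  ∫ y, f (x - y) ∂μ

/-- Couplings of two measures. -/
def couplings {E : Type*} [MeasurableSpace E] (μ ν : Measure E) : Set (Measure (E × E)) :=
  {π | π.map Prod.fst = μ ∧ π.map Prod.snd = ν}

/-- The 1-Wasserstein distance, as an infimum over couplings. -/
noncomputable def W1 {E : Type*} [MeasurableSpace E] [EDist E] (μ ν : Measure E) : ℝ≥0∞ :=
  ⨅ π ∈ couplings μ ν, ∫⁻ q, edist q.1 q.2 ∂π

/-!
Fix a coupling `π` of `μ` and `ν`. Writing `g (x - y) - g (x - z)` as the integral of `∇g` along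
the segment from `x - z` to `x - y` bounds `|g ∗ μ - g ∗ ν| (x)` by `(|∇g| ∗ σ_π) (x)`, where the
measure `σ_π` spreads the mass `‖y - z‖ dπ(y, z)` uniformly over the segments `[z, y]`; its total
mass is the transport cost of `π`. Young's inequality `‖F ∗ σ‖_p ≤ ‖F‖_p σ(univ)` then gives
`‖g ∗ μ - g ∗ ν‖_p ≤ ‖∇g‖_p · cost(π)`, and it remains to take the infimum over `π`.
The same bound for the product coupling, whose cost is finite by the first-moment assumptions,
shows that `|∇g| ∗ σ_π` is finite a.e., hence that the convolutions `g ∗ μ`, `g ∗ ν` are a.e.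
absolutely convergent integrals.
-/

open Set

theorem rpow_lintegral_le_measure_univ_rpow_mul {α : Type*} [MeasurableSpace α] {σ : Measure α}
    {f : α → ℝ≥0∞} (hf : AEMeasurable f σ) {P : ℝ} (hP : 1 ≤ P) :
    (∫⁻ y, f y ∂σ) ^ P ≤ σ univ ^ (P - 1) * ∫⁻ y, f y ^ P ∂σ := by
  have hP0 : 0 < P := zero_lt_one.trans_le hP
  have hPq : (1 : ℝ≥0∞) ≤ ENNReal.ofReal P := by simpa using ENNReal.ofReal_le_ofReal hP
  have holder := eLpNorm_le_eLpNorm_mul_rpow_measure_univ hPq hf.aestronglyMeasurable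
  rw [eLpNorm_one_eq_lintegral_enorm, eLpNorm_eq_lintegral_rpow_enorm_toReal (by positivity)
    ofReal_ne_top, toReal_ofReal hP0.le] at holder
  simp only [enorm_eq_self, toReal_one, div_one] at holder
  calc (∫⁻ y, f y ∂σ) ^ P
      ≤ ((∫⁻ y, f y ^ P ∂σ) ^ (1 / P) * σ univ ^ (1 - 1 / P)) ^ P := by gcongr
    _ = σ univ ^ (P - 1) * ∫⁻ y, f y ^ P ∂σ := by
      rw [mul_rpow_of_nonneg _ _ hP0.le, ← ENNReal.rpow_mul, ← ENNReal.rpow_mul,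
        one_div_mul_cancel hP0.ne', ENNReal.rpow_one, sub_mul, one_mul, one_div_mul_cancel hP0.ne',
        mul_comm]

section Convolution

variable {G : Type*} [MeasurableSpace G]

noncomputable def lmeasConv [Sub G] (F : G → ℝ≥0∞) (σ : Measure G) (x : G) : ℝ≥0∞ :=
  ∫⁻ y, F (x - y) ∂σ

variable [AddGroup G] [MeasurableAdd₂ G] [MeasurableNeg G] {μ σ : Measure G} {F : G → ℝ≥0∞}

theorem measurable_lmeasConv [SFinite σ] (hF : Measurable F) : Measurable (lmeasConv F σ) :=
  (hF.comp measurable_sub).lintegral_prod_right'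

variable [SFinite μ] [μ.IsAddRightInvariant]

theorem ae_lmeasConv_le [SFinite σ] {c : ℝ≥0∞} (hF : ∀ᵐ z ∂μ, F z ≤ c) :
    ∀ᵐ x ∂μ, lmeasConv F σ x ≤ c * σ univ := by
  have hprod := (quasiMeasurePreserving_sub_of_right_invariant μ σ).ae hF
  filter_upwards [Measure.ae_ae_of_ae_prod hprod] with x hx
  calc lmeasConv F σ x ≤ ∫⁻ _, c ∂σ := lintegral_mono_ae hx
    _ = c * σ univ := lintegral_const c

theorem eLpNorm_lmeasConv_le {p : ℝ≥0∞} (hp : 1 ≤ p) [SFinite σ] (hF : Measurable F) :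
    eLpNorm (lmeasConv F σ) p μ ≤ eLpNorm F p μ * σ univ := by
  rcases eq_or_ne p ∞ with rfl | hp_top
  · simp only [eLpNorm_exponent_top, eLpNormEssSup, enorm_eq_self]
    exact essSup_le_of_ae_le _ (ae_lmeasConv_le (ENNReal.ae_le_essSup F))
  have hp0 : p ≠ 0 := (zero_lt_one.trans_le hp).ne'
  set P := p.toReal
  have hP : 1 ≤ P := by simpa using toReal_mono hp_top hp
  have hP0 : 0 < P := zero_lt_one.trans_le hP
  have hFsub : Measurable fun q : G × G => F (q.1 - q.2) ^ P :=
    (hF.comp measurable_sub).pow_const P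
  have hbound : ∫⁻ x, lmeasConv F σ x ^ P ∂μ ≤ (∫⁻ x, F x ^ P ∂μ) * σ univ ^ P := calc
    ∫⁻ x, lmeasConv F σ x ^ P ∂μ
      ≤ ∫⁻ x, σ univ ^ (P - 1) * ∫⁻ y, F (x - y) ^ P ∂σ ∂μ := lintegral_mono fun x =>
        rpow_lintegral_le_measure_univ_rpow_mul (by fun_prop) hP
    _ = σ univ ^ (P - 1) * ∫⁻ y, ∫⁻ x, F (x - y) ^ P ∂μ ∂σ := by
      rw [lintegral_const_mul _ hFsub.lintegral_prod_right',
        lintegral_lintegral_swap hFsub.aemeasurable]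
    _ = σ univ ^ (P - 1) * ((∫⁻ x, F x ^ P ∂μ) * σ univ) := by
      simp_rw [lintegral_sub_right_eq_self (fun x => F x ^ P), lintegral_const]
    _ = (∫⁻ x, F x ^ P ∂μ) * σ univ ^ P := by
      rw [mul_left_comm]
      congr 1
      conv_rhs => rw [← sub_add_cancel P 1]
      rw [ENNReal.rpow_add_of_nonneg _ _ (sub_nonneg.2 hP) zero_le_one, ENNReal.rpow_one]
  rw [eLpNorm_eq_lintegral_rpow_enorm_toReal hp0 hp_top,
    eLpNorm_eq_lintegral_rpow_enorm_toReal hp0 hp_top]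
  simp only [enorm_eq_self]
  calc (∫⁻ x, lmeasConv F σ x ^ P ∂μ) ^ (1 / P)
      ≤ ((∫⁻ x, F x ^ P ∂μ) * σ univ ^ P) ^ (1 / P) := by gcongr
    _ = (∫⁻ x, F x ^ P ∂μ) ^ (1 / P) * σ univ := by
      rw [mul_rpow_of_nonneg _ _ (by positivity), ← ENNReal.rpow_mul,
        mul_one_div_cancel hP0.ne', ENNReal.rpow_one]

end Convolution

section Segment

variable {E F : Type*} [NormedAddCommGroup E] [NormedSpace ℝ E]
  [NormedAddCommGroup F] [NormedSpace ℝ F] [CompleteSpace F]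

theorem enorm_sub_le_lintegral_deriv {φ : ℝ → F} {a b : ℝ} (hab : a ≤ b)
    (hφ : ∀ t ∈ Icc a b, DifferentiableAt ℝ φ t) :
    ‖φ b - φ a‖ₑ ≤ ∫⁻ t in Icc a b, ‖deriv φ t‖ₑ := by
  by_cases hfin : ∫⁻ t in Icc a b, ‖deriv φ t‖ₑ = ∞
  · simp [hfin]
  have hint : IntegrableOn (deriv φ) (uIcc a b) := by
    rw [uIcc_of_le hab]
    exact ⟨(stronglyMeasurable_deriv φ).aestronglyMeasurable, lt_top_iff_ne_top.2 hfin⟩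
  rw [← intervalIntegral.integral_eq_sub_of_hasDerivAt
    (fun t ht => (hφ t (uIcc_of_le hab ▸ ht)).hasDerivAt) hint.intervalIntegrable,
    intervalIntegral.integral_of_le hab]
  exact (enorm_integral_le_lintegral_enorm _).trans (lintegral_mono_set Ioc_subset_Icc_self)

theorem enorm_sub_le_lintegral_fderiv_segment {f : E → F} (hf : Differentiable ℝ f) (y z : E) :
    ‖f y - f z‖ₑ ≤ (∫⁻ t in Icc (0 : ℝ) 1, ‖fderiv ℝ f (z + t • (y - z))‖ₑ) * ‖y - z‖ₑ := by
  have hderiv (t : ℝ) : HasDerivAt (fun t : ℝ => f (z + t • (y - z)))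
      (fderiv ℝ f (z + t • (y - z)) (y - z)) t := by
    have hline : HasDerivAt (fun t : ℝ => z + t • (y - z)) (y - z) t := by
      simpa using ((hasDerivAt_id t).smul_const (y - z)).const_add z
    exact (hf _).hasFDerivAt.comp_hasDerivAt t hline
  calc ‖f y - f z‖ₑ ≤ ∫⁻ t in Icc (0 : ℝ) 1, ‖fderiv ℝ f (z + t • (y - z)) (y - z)‖ₑ := by
        simpa [(hderiv _).deriv] using
          enorm_sub_le_lintegral_deriv zero_le_one fun t _ => (hderiv t).differentiableAt
    _ ≤ ∫⁻ t in Icc (0 : ℝ) 1, ‖fderiv ℝ f (z + t • (y - z))‖ₑ * ‖y - z‖ₑ :=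
        lintegral_mono fun t => ContinuousLinearMap.le_opENorm _ _
    _ = _ := lintegral_mul_const' _ _ enorm_ne_top

variable [MeasurableSpace E] [BorelSpace E] [SecondCountableTopology E]

/-- `σ_π(A) = ∫ ‖y - z‖ · Leb {t ∈ [0, 1] | z + t • (y - z) ∈ A} dπ(y, z)`. -/
noncomputable def segmentMeasure (π : Measure (E × E)) : Measure E :=
  ((π.prod (volume.restrict (Icc (0 : ℝ) 1))).withDensity fun r => ‖r.1.1 - r.1.2‖ₑ).map
    fun r => r.1.2 + r.2 • (r.1.1 - r.1.2)

instance (π : Measure (E × E)) [SFinite π] : SFinite (segmentMeasure π) := by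
  unfold segmentMeasure
  infer_instance

theorem lintegral_segmentMeasure (π : Measure (E × E)) {H : E → ℝ≥0∞}
    (hH : Measurable H) :
    ∫⁻ w, H w ∂(segmentMeasure π) =
      ∫⁻ q, (∫⁻ t in Icc (0 : ℝ) 1, H (q.2 + t • (q.1 - q.2))) * ‖q.1 - q.2‖ₑ ∂π := by
  rw [segmentMeasure, lintegral_map hH (by fun_prop),
    lintegral_withDensity_eq_lintegral_mul _ (by fun_prop) (by fun_prop),
    lintegral_prod _ (by fun_prop)]
  refine lintegral_congr fun q => ?_
  rw [← lintegral_mul_const' _ _ enorm_ne_top]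
  simp only [Pi.mul_apply, mul_comm]

theorem segmentMeasure_univ (π : Measure (E × E)) :
    segmentMeasure π univ = ∫⁻ q, edist q.1 q.2 ∂π := by
  rw [← lintegral_one, lintegral_segmentMeasure π measurable_const]
  simp [edist_eq_enorm_sub]

theorem lintegral_enorm_sub_le_lmeasConv_segmentMeasure {g : E → F} (hg : Differentiable ℝ g)
    (π : Measure (E × E)) (x : E) :
    ∫⁻ q, ‖g (x - q.1) - g (x - q.2)‖ₑ ∂π ≤
      lmeasConv (fun w => ‖fderiv ℝ g w‖ₑ) (segmentMeasure π) x := by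
  rw [lmeasConv, lintegral_segmentMeasure π (by fun_prop)]
  refine lintegral_mono fun q => (enorm_sub_le_lintegral_fderiv_segment hg _ _).trans_eq ?_
  rw [_root_.sub_sub_sub_cancel_left, enorm_sub_rev]
  congr 1
  refine lintegral_congr fun t => ?_
  congr 2
  module

end Segment

theorem ae_lt_top_of_eLpNorm_ne_top {α : Type*} [MeasurableSpace α] {μ : Measure α}
    {p : ℝ≥0∞} {f : α → ℝ≥0∞} (hf : AEMeasurable f μ) (hp : p ≠ 0) (h : eLpNorm f p μ ≠ ∞) :
    ∀ᵐ x ∂μ, f x < ∞ := by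
  rcases eq_or_ne p ∞ with rfl | hp_top
  · filter_upwards [enorm_ae_le_eLpNormEssSup f μ] with x hx
    exact hx.trans_lt (by simpa [lt_top_iff_ne_top] using h)
  rw [eLpNorm_eq_lintegral_rpow_enorm_toReal hp hp_top] at h
  simp only [enorm_eq_self] at h
  have hP : 0 < p.toReal := toReal_pos hp hp_top
  have hI := (rpow_lt_top_iff_of_pos (one_div_pos.2 hP)).1 (lt_top_iff_ne_top.2 h)
  filter_upwards [ae_lt_top' (hf.pow_const _) hI.ne] with x hx
  exact (rpow_lt_top_iff_of_pos hP).1 hx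

theorem integrable_of_lintegral_prod_enorm_sub_ne_top {α F : Type*} [MeasurableSpace α]
    [NormedAddCommGroup F] {μ ν : Measure α} [IsFiniteMeasure μ] [SFinite ν] [NeZero ν]
    {f : α → F} (hf : StronglyMeasurable f)
    (h : ∫⁻ q, ‖f q.1 - f q.2‖ₑ ∂(μ.prod ν) ≠ ∞) : Integrable f μ := by
  have hmeas : Measurable fun q : α × α => ‖f q.1 - f q.2‖ₑ :=
    ((hf.comp_measurable measurable_fst).sub (hf.comp_measurable measurable_snd)).enorm
  rw [lintegral_prod_symm' _ hmeas] at h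
  obtain ⟨z, hz⟩ := (ae_lt_top hmeas.lintegral_prod_left' h).exists
  have : Integrable (fun y => f y - f z) μ :=
    ⟨(hf.sub stronglyMeasurable_const).aestronglyMeasurable, hz⟩
  exact (this.add (integrable_const (f z))).congr (.of_forall fun y => sub_add_cancel (f y) (f z))

theorem prod_mem_couplings {E : Type*} [MeasurableSpace E] (μ ν : Measure E)
    [IsProbabilityMeasure μ] [IsProbabilityMeasure ν] : μ.prod ν ∈ couplings μ ν := by
  simp [couplings]

theorem isProbabilityMeasure_of_mem_couplings {E : Type*} [MeasurableSpace E] {μ ν : Measure E}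
    {π : Measure (E × E)} [IsProbabilityMeasure μ] (hπ : π ∈ couplings μ ν) :
    IsProbabilityMeasure π :=
  ⟨by simpa [Measure.map_apply measurable_fst MeasurableSet.univ] using
    congrArg (· univ) hπ.1⟩

theorem integral_sub_integral_eq_of_mem_couplings {E : Type*} [MeasurableSpace E]
    {μ ν : Measure E} {π : Measure (E × E)} (hπ : π ∈ couplings μ ν) {f h : E → ℝ}
    (hf : Integrable f μ) (hh : Integrable h ν) :
    ∫ y, f y ∂μ - ∫ z, h z ∂ν = ∫ q, f q.1 - h q.2 ∂π := by
  obtain ⟨hπ₁, hπ₂⟩ := hπ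
  subst hπ₁ hπ₂
  rw [integral_map measurable_fst.aemeasurable hf.aestronglyMeasurable,
    integral_map measurable_snd.aemeasurable hh.aestronglyMeasurable, integral_sub]
  · exact (integrable_map_measure hf.aestronglyMeasurable measurable_fst.aemeasurable).1 hf
  · exact (integrable_map_measure hh.aestronglyMeasurable measurable_snd.aemeasurable).1 hh

theorem le_mul_W1 {E : Type*} [MeasurableSpace E] [EDist E] {μ ν : Measure E} {L C : ℝ≥0∞}
    (hC : C ≠ ∞) (hne : (couplings μ ν).Nonempty)
    (h : ∀ π ∈ couplings μ ν, L ≤ C * ∫⁻ q, edist q.1 q.2 ∂π) :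
    L ≤ C * W1 μ ν := by
  have := hne.to_subtype
  rw [W1, iInf_subtype', ENNReal.mul_iInf (by simp [hC])]
  exact le_iInf fun π => h π π.2

theorem lintegral_edist_prod_le {E : Type*} [NormedAddCommGroup E] [MeasurableSpace E]
    [OpensMeasurableSpace E] (μ ν : Measure E) [IsProbabilityMeasure μ] [IsProbabilityMeasure ν] :
    ∫⁻ q, edist q.1 q.2 ∂(μ.prod ν) ≤ ∫⁻ y, ‖y‖ₑ ∂μ + ∫⁻ z, ‖z‖ₑ ∂ν := calc
  ∫⁻ q, edist q.1 q.2 ∂(μ.prod ν) ≤ ∫⁻ q, ‖q.1‖ₑ + ‖q.2‖ₑ ∂(μ.prod ν) :=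
      lintegral_mono fun q => by simpa [edist_eq_enorm_sub] using enorm_sub_le
  _ = ∫⁻ y, ‖y‖ₑ ∂μ + ∫⁻ z, ‖z‖ₑ ∂ν := by
      rw [lintegral_add_left (by fun_prop), lintegral_prod _ (by fun_prop),
        lintegral_prod_symm _ (by fun_prop)]
      simp

section Gradient

variable {E : Type*} [NormedAddCommGroup E] [NormedSpace ℝ E] [MeasurableSpace E] [BorelSpace E]
  [SecondCountableTopology E] {p : ℝ≥0∞} {g : E → ℝ} {μ ν : Measure E}

theorem ae_integrable_comp_sub (m : Measure E) [SFinite m] [m.IsAddRightInvariant] (hp : 1 ≤ p)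
    (hg : Differentiable ℝ g) (hgrad : eLpNorm (fderiv ℝ g) p m ≠ ∞)
    [IsProbabilityMeasure μ] [IsProbabilityMeasure ν]
    (hcost : ∫⁻ q, edist q.1 q.2 ∂(μ.prod ν) ≠ ∞) :
    ∀ᵐ x ∂m, Integrable (fun y => g (x - y)) μ ∧ Integrable (fun y => g (x - y)) ν := by
  have hconv :
      eLpNorm (lmeasConv (fun w => ‖fderiv ℝ g w‖ₑ) (segmentMeasure (μ.prod ν))) p m ≠ ∞ :=
    ne_top_of_le_ne_top (mul_ne_top (by rwa [eLpNorm_enorm]) (by rwa [segmentMeasure_univ]))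
      (eLpNorm_lmeasConv_le hp (by fun_prop))
  filter_upwards [ae_lt_top_of_eLpNorm_ne_top (measurable_lmeasConv (by fun_prop)).aemeasurable
    (zero_lt_one.trans_le hp).ne' hconv] with x hx
  have hdiff := ((lintegral_enorm_sub_le_lmeasConv_segmentMeasure hg _ x).trans_lt hx).ne
  have hgx : StronglyMeasurable fun y => g (x - y) :=
    (hg.continuous.comp (continuous_const.sub continuous_id)).stronglyMeasurable
  refine ⟨integrable_of_lintegral_prod_enorm_sub_ne_top hgx hdiff,
    integrable_of_lintegral_prod_enorm_sub_ne_top (ν := μ) hgx ?_⟩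
  rw [← lintegral_prod_swap]
  simpa only [Prod.fst_swap, Prod.snd_swap, enorm_sub_rev] using hdiff

end Gradient

theorem eLpNorm_measConv_sub_le {d : ℕ} {p : ℝ≥0∞} (hp : 1 ≤ p)
    {g : EuclideanSpace ℝ (Fin d) → ℝ} (hg : Differentiable ℝ g)
    {μ ν : Measure (EuclideanSpace ℝ (Fin d))}
    {π : Measure (EuclideanSpace ℝ (Fin d) × EuclideanSpace ℝ (Fin d))} [SFinite π]
    (hπ : π ∈ couplings μ ν)
    (hint : ∀ᵐ x, Integrable (fun y => g (x - y)) μ ∧ Integrable (fun y => g (x - y)) ν) :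
    eLpNorm (fun x => measConv g μ x - measConv g ν x) p volume ≤
      eLpNorm (fderiv ℝ g) p volume * ∫⁻ q, edist q.1 q.2 ∂π := by
  have hpt : ∀ᵐ x, ‖measConv g μ x - measConv g ν x‖ₑ ≤
      lmeasConv (fun w => ‖fderiv ℝ g w‖ₑ) (segmentMeasure π) x := by
    filter_upwards [hint] with x ⟨hμx, hνx⟩
    rw [measConv, measConv, integral_sub_integral_eq_of_mem_couplings hπ hμx hνx]
    exact (enorm_integral_le_lintegral_enorm _).trans
      (lintegral_enorm_sub_le_lmeasConv_segmentMeasure hg π x)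
  calc eLpNorm (fun x => measConv g μ x - measConv g ν x) p volume
      ≤ eLpNorm (lmeasConv (fun w => ‖fderiv ℝ g w‖ₑ) (segmentMeasure π)) p volume :=
        eLpNorm_mono_enorm_ae (by simpa using hpt)
    _ ≤ eLpNorm (fun w => ‖fderiv ℝ g w‖ₑ) p volume * segmentMeasure π univ :=
        eLpNorm_lmeasConv_le hp (by fun_prop)
    _ = eLpNorm (fderiv ℝ g) p volume * ∫⁻ q, edist q.1 q.2 ∂π := by
        rw [eLpNorm_enorm, segmentMeasure_univ]

/-- `‖g ∗ (μ - ν)‖_{L^p} ≤ ‖∇g‖_{L^p} W₁(μ, ν)` for probability measures with finite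
first moment. -/
theorem conv_diff_Lp_le_grad_wasserstein {d : ℕ} (p : ℝ≥0∞) (hp : 1 ≤ p)
    (g : EuclideanSpace ℝ (Fin d) → ℝ) (hg : Differentiable ℝ g)
    (hgrad : MemLp (fun x => ‖fderiv ℝ g x‖) p volume)
    (μ ν : Measure (EuclideanSpace ℝ (Fin d)))
    (hμ : IsProbabilityMeasure μ) (hν : IsProbabilityMeasure ν)
    (hμ1 : ∫⁻ x, (‖x‖₊ : ℝ≥0∞) ∂μ < ⊤) (hν1 : ∫⁻ x, (‖x‖₊ : ℝ≥0∞) ∂ν < ⊤) :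
    eLpNorm (fun x => measConv g μ x - measConv g ν x) p volume ≤
      eLpNorm (fun x => ‖fderiv ℝ g x‖) p volume * W1 μ ν := by
  have hcost := ((lintegral_edist_prod_le μ ν).trans_lt (add_lt_top.2 ⟨hμ1, hν1⟩)).ne
  have hgrad' : eLpNorm (fderiv ℝ g) p volume ≠ ∞ :=
    eLpNorm_norm (fderiv ℝ g) ▸ hgrad.eLpNorm_ne_top
  have hint := ae_integrable_comp_sub volume hp hg hgrad' hcost
  rw [eLpNorm_norm]
  refine le_mul_W1 hgrad' ⟨_, prod_mem_couplings μ ν⟩ fun π hπ => ?_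
  have := isProbabilityMeasure_of_mem_couplings hπ
  exact eLpNorm_measConv_sub_le hp hg hπ hint
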